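/- arXiv:1704.07726 — 3 statements merged into one kernel-verified Lean document; each statement's English description precedes it below -/
import Mathlib

section
/- Let b ∈ ℂⁿ, let f be a holomorphic function on the open polydisc PΔ(b;r) ⊆ ℂⁿ, and let 1 ≤ q ≤ n. Then there exist holomorphic functions h₁, …, h_q on PΔ(b;r) and a holomorphic function g on the polydisc {(z_{q+1}, …, z_n) : |z_j − b_j| < r_j for q+1 ≤ j ≤ n} such that f(z) = Σ_{j=1}^q (z_j − b_j)·h_j(z) + g(z_{q+1}, …, z_n) for all z ∈ PΔ(b;r). -/
/-!
Freezing the first coordinates one at a time telescopes `f z - f (b₁, …, b_q, z_{q+1}, …, z_n)`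
into `q` differences `G z - G (z with z_j := b_j)`, and such a difference is `(z_j - b_j)` times the
slope of `w ↦ G (z with z_j := w)` between `b_j` and `z_j`. This slope is holomorphic in `z`:
for `|z_j - b_j| < ρ` it is the Cauchy integral over `|w - b_j| = ρ` of
`(w - z_j)⁻¹ (w - b_j)⁻¹ (G (z with z_j := w) - G (z with z_j := b_j))`, and a contour integral
of functions holomorphic in `z` and jointly continuous is holomorphic: the Cauchy estimate
bounds the derivatives uniformly, so one may differentiate under the integral sign.
-/

open Set Metric Function Filter
open scoped Interval Topology

variable {E F : Type*} [NormedAddCommGroup E] [NormedSpace ℂ E]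
  [NormedAddCommGroup F] [NormedSpace ℂ F]

theorem norm_fderiv_le_of_forall_norm_le {f : E → F} {c : E} {R M : ℝ} (hR : 0 < R)
    (hd : DifferentiableOn ℂ f (ball c R)) (hM : ∀ z ∈ ball c R, ‖f z‖ ≤ M) :
    ‖fderiv ℂ f c‖ ≤ 2 * M / R := by
  refine Complex.norm_fderiv_le_div_of_mapsTo_ball hd (fun z hz => ?_) hR
  rw [mem_closedBall, two_mul]
  exact (dist_le_norm_add_norm _ _).trans (add_le_add (hM z hz) (hM c (mem_ball_self hR)))

theorem continuousOn_fderiv_of_continuousOn_prod [ProperSpace E] {T : Type*}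
    [TopologicalSpace T] {f : E → T → F} {V : Set E} {s : Set T} (hV : IsOpen V)
    (hf : ContinuousOn (uncurry f) (V ×ˢ s)) (hfd : ∀ t ∈ s, DifferentiableOn ℂ (f · t) V)
    {z : E} (hz : z ∈ V) : ContinuousOn (fun t => fderiv ℂ (f · t) z) s := by
  obtain ⟨r, hr, hrV⟩ := nhds_basis_closedBall.mem_iff.1 (hV.mem_nhds hz)
  have hdiff : ∀ t ∈ s, DifferentiableOn ℂ (f · t) (ball z r) := fun t ht =>
    (hfd t ht).mono (ball_subset_closedBall.trans hrV)
  have hz' : ball z r ∈ 𝓝 z := ball_mem_nhds z hr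
  intro t₀ ht₀
  rw [ContinuousWithinAt, Metric.tendsto_nhds]
  intro ε hε
  have hswap : ContinuousOn (uncurry fun t x => f x t) (s ×ˢ closedBall z r) :=
    hf.comp continuous_swap.continuousOn fun p hp => ⟨hrV hp.2, hp.1⟩
  obtain ⟨v, hv, hvε⟩ := (isCompact_closedBall z r).mem_uniformity_of_prod hswap ht₀
    (dist_mem_uniformity (show 0 < ε * r / 4 by positivity))
  filter_upwards [hv, self_mem_nhdsWithin] with t htv hts
  -- Cauchy estimate for `f (·, t) - f (·, t₀)`, which is uniformly small on `ball z r`.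
  rw [dist_eq_norm, ← fderiv_sub ((hdiff t hts).differentiableAt hz')
    ((hdiff t₀ ht₀).differentiableAt hz')]
  calc ‖fderiv ℂ (fun x => f x t - f x t₀) z‖ ≤ 2 * (ε * r / 4) / r :=
        norm_fderiv_le_of_forall_norm_le hr ((hdiff t hts).sub (hdiff t₀ ht₀)) fun x hx =>
          (dist_eq_norm (f x t) (f x t₀) ▸ (hvε t htv x (ball_subset_closedBall hx)).le)
    _ < ε := by field_simp; linarith

theorem differentiableOn_intervalIntegral_of_continuousOn_prod [ProperSpace E] [CompleteSpace F]
    {f : E → ℝ → F} {V : Set E} {a b : ℝ} (hV : IsOpen V)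
    (hf : ContinuousOn (uncurry f) (V ×ˢ [[a, b]]))
    (hfd : ∀ t ∈ [[a, b]], DifferentiableOn ℂ (f · t) V) :
    DifferentiableOn ℂ (fun z => ∫ t in a..b, f z t) V := by
  intro z₀ hz₀
  obtain ⟨r, hr, hrV⟩ := nhds_basis_closedBall.mem_iff.1 (hV.mem_nhds hz₀)
  obtain ⟨M, hM⟩ := ((isCompact_closedBall z₀ r).prod isCompact_uIcc).exists_bound_of_continuousOn
    (hf.mono (prod_mono hrV subset_rfl))
  have hslice : ∀ z ∈ V, ContinuousOn (f z) [[a, b]] := fun z hz =>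
    hf.comp (continuousOn_const.prodMk continuousOn_id) fun t ht => ⟨hz, ht⟩
  have hderiv_le : ∀ t ∈ [[a, b]], ∀ z ∈ ball z₀ (r / 2),
      ‖fderiv ℂ (f · t) z‖ ≤ 2 * M / (r / 2) := by
    intro t ht z hz
    have hsub : ball z (r / 2) ⊆ closedBall z₀ r := by
      intro x hx
      rw [mem_closedBall]
      linarith [dist_triangle x z z₀, mem_ball.1 hx, mem_ball.1 hz]
    exact norm_fderiv_le_of_forall_norm_le (by positivity) ((hfd t ht).mono (hsub.trans hrV))
      fun x hx => hM (x, t) ⟨hsub hx, ht⟩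
  have hmem : ∀ z ∈ ball z₀ (r / 2), z ∈ V := fun z hz =>
    hrV (ball_subset_closedBall (ball_subset_ball (by linarith) hz))
  refine (intervalIntegral.hasFDerivAt_integral_of_dominated_of_fderiv_le
    (F' := fun z t => fderiv ℂ (f · t) z) (bound := fun _ => 2 * M / (r / 2))
    (ball_mem_nhds z₀ (half_pos hr)) ?_ ((hslice z₀ hz₀).intervalIntegrable) ?_ ?_
    intervalIntegrable_const ?_).differentiableAt.differentiableWithinAt
  · filter_upwards [hV.mem_nhds hz₀] with z hz
    exact (hslice z hz).aestronglyMeasurable_of_subset_isCompact isCompact_uIcc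
      measurableSet_uIoc uIoc_subset_uIcc
  · exact (continuousOn_fderiv_of_continuousOn_prod hV hf hfd hz₀
      ).aestronglyMeasurable_of_subset_isCompact isCompact_uIcc measurableSet_uIoc uIoc_subset_uIcc
  · exact Eventually.of_forall fun t ht => hderiv_le t (uIoc_subset_uIcc ht)
  · refine Eventually.of_forall fun t ht z hz => ?_
    exact ((hfd t (uIoc_subset_uIcc ht)).differentiableAt (hV.mem_nhds (hmem z hz))).hasFDerivAt

theorem differentiableOn_circleIntegral_of_continuousOn_prod [ProperSpace E] [CompleteSpace F]
    {f : E → ℂ → F} {V : Set E} {c : ℂ} {R : ℝ} (hR : 0 ≤ R) (hV : IsOpen V)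
    (hf : ContinuousOn (uncurry f) (V ×ˢ sphere c R))
    (hfd : ∀ w ∈ sphere c R, DifferentiableOn ℂ (f · w) V) :
    DifferentiableOn ℂ (fun z => ∮ w in C(c, R), f z w) V := by
  have hderiv : Continuous (deriv (circleMap c R)) := by
    simp only [funext (deriv_circleMap c R)]
    fun_prop
  refine differentiableOn_intervalIntegral_of_continuousOn_prod hV ?_
    fun θ _ => (hfd _ (circleMap_mem_sphere c hR θ)).const_smul _
  exact (hderiv.comp continuous_snd).continuousOn.smul <| hf.comp
    (continuous_fst.prodMk ((continuous_circleMap c R).comp continuous_snd)).continuousOn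
    fun p hp => ⟨hp.1, circleMap_mem_sphere c hR p.2⟩

theorem dslope_eq_circleIntegral [CompleteSpace F] {s : ℂ → F} {c x : ℂ} {R : ℝ}
    (hs : DifferentiableOn ℂ s (closedBall c R)) (hx : x ∈ ball c R) :
    dslope s c x = (2 * Real.pi * Complex.I)⁻¹ •
      ∮ w in C(c, R), (w - x)⁻¹ • (w - c)⁻¹ • (s w - s c) := by
  have hR : 0 < R := pos_of_mem_ball hx
  have hds : DifferentiableOn ℂ (dslope s c) (closedBall c R) :=
    (Complex.differentiableOn_dslope (closedBall_mem_nhds c hR)).2 hs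
  rw [← hds.diffContOnCl_ball subset_rfl |>.two_pi_i_inv_smul_circleIntegral_sub_inv_smul hx]
  congr 1
  refine circleIntegral.integral_congr hR.le fun w hw => ?_
  have hwc : w ≠ c := ne_of_mem_sphere hw hR.ne'
  simp only [dslope_of_ne s hwc, slope_def_module]

section Polydisc

variable {ι : Type*}

def polydisc (b : ι → ℂ) (r : ι → ℝ) : Set (ι → ℂ) := {z | ∀ j, ‖z j - b j‖ < r j}

theorem isOpen_polydisc [Finite ι] (b : ι → ℂ) (r : ι → ℝ) : IsOpen (polydisc b r) := by
  simp only [polydisc, ofPred_forall]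
  exact isOpen_iInter_of_finite fun j => isOpen_lt (by fun_prop) continuous_const

theorem update_mem_polydisc [DecidableEq ι] {b z : ι → ℂ} {r : ι → ℝ} (hz : z ∈ polydisc b r)
    {j : ι} {w : ℂ} (hw : ‖w - b j‖ < r j) : update z j w ∈ polydisc b r := by
  intro i
  rcases eq_or_ne i j with rfl | hij
  · simpa using hw
  · simpa [hij] using hz i

theorem differentiable_update_left [Fintype ι] [DecidableEq ι] (j : ι) (w : ℂ) :
    Differentiable ℂ fun z : ι → ℂ => update z j w :=
  differentiable_pi.2 fun i => by
    simp only [update_apply]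
    split_ifs <;> fun_prop

noncomputable def coordDslope [DecidableEq ι] (G : (ι → ℂ) → F) (b : ι → ℂ) (j : ι)
    (z : ι → ℂ) : F :=
  dslope (fun w => G (update z j w)) (b j) (z j)

theorem sub_smul_coordDslope [DecidableEq ι] (G : (ι → ℂ) → F) (b z : ι → ℂ) (j : ι) :
    (z j - b j) • coordDslope G b j z = G z - G (update z j (b j)) := by
  rw [coordDslope, sub_smul_dslope, update_eq_self]

theorem coordDslope_eq_circleIntegral [Fintype ι] [DecidableEq ι] [CompleteSpace F]
    {G : (ι → ℂ) → F} {b z : ι → ℂ} {r : ι → ℝ} {j : ι} {ρ : ℝ}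
    (hG : DifferentiableOn ℂ G (polydisc b r))
    (hz : z ∈ polydisc b r) (hzρ : ‖z j - b j‖ < ρ) (hρ : ρ < r j) :
    coordDslope G b j z = (2 * Real.pi * Complex.I)⁻¹ •
      ∮ w in C(b j, ρ), (w - z j)⁻¹ • (w - b j)⁻¹ • (G (update z j w) - G (update z j (b j))) := by
  refine dslope_eq_circleIntegral (fun w hw => ?_) (mem_ball_iff_norm.2 hzρ)
  have hmem : update z j w ∈ polydisc b r :=
    update_mem_polydisc hz ((mem_closedBall_iff_norm.1 hw).trans_lt hρ)
  exact ((hG.differentiableAt ((isOpen_polydisc b r).mem_nhds hmem)).comp w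
    (hasFDerivAt_update z w).differentiableAt).differentiableWithinAt

theorem differentiableOn_coordDslope [Fintype ι] [DecidableEq ι] [CompleteSpace F]
    {G : (ι → ℂ) → F} {b : ι → ℂ} {r : ι → ℝ} (hG : DifferentiableOn ℂ G (polydisc b r)) (j : ι) :
    DifferentiableOn ℂ (coordDslope G b j) (polydisc b r) := by
  intro z₀ hz₀
  obtain ⟨ρ, hz₀ρ, hρr⟩ := exists_between (hz₀ j)
  have hρ : 0 < ρ := (norm_nonneg _).trans_lt hz₀ρ
  set V := polydisc b r ∩ {z | ‖z j - b j‖ < ρ}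
  have hV : IsOpen V := (isOpen_polydisc b r).inter (isOpen_lt (by fun_prop) continuous_const)
  have hupd : ∀ z ∈ V, ∀ w ∈ closedBall (b j) ρ, update z j w ∈ polydisc b r := fun z hz w hw =>
    update_mem_polydisc hz.1 ((mem_closedBall_iff_norm.1 hw).trans_lt hρr)
  have hcenter : ∀ z ∈ V, update z j (b j) ∈ polydisc b r := fun z hz =>
    hupd z hz _ (mem_closedBall_self hρ.le)
  have hsub_ne : ∀ z ∈ V, ∀ w ∈ sphere (b j) ρ, w - z j ≠ 0 := by
    intro z hz w hw hwz
    rw [sub_eq_zero.1 hwz, mem_sphere_iff_norm] at hw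
    exact hz.2.ne hw
  have hcenter_ne : ∀ w ∈ sphere (b j) ρ, w - b j ≠ 0 := fun w hw =>
    sub_ne_zero.2 (ne_of_mem_sphere hw hρ.ne')
  let f : (ι → ℂ) → ℂ → F := fun z w =>
    (w - z j)⁻¹ • (w - b j)⁻¹ • (G (update z j w) - G (update z j (b j)))
  have hcont : ContinuousOn (uncurry f) (V ×ˢ sphere (b j) ρ) := by
    refine ((continuous_snd.sub ((continuous_apply j).comp continuous_fst)).continuousOn.inv₀
      fun p hp => hsub_ne p.1 hp.1 p.2 hp.2).smul
      (((continuous_snd.sub continuous_const).continuousOn.inv₀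
        fun p hp => hcenter_ne p.2 hp.2).smul
      ((hG.continuousOn.comp (continuous_fst.update j continuous_snd).continuousOn ?_).sub
        (hG.continuousOn.comp (continuous_fst.update j continuous_const).continuousOn ?_)))
    · exact fun p hp => hupd p.1 hp.1 p.2 (sphere_subset_closedBall hp.2)
    · exact fun p hp => hcenter p.1 hp.1
  have hdiff : ∀ w ∈ sphere (b j) ρ, DifferentiableOn ℂ (f · w) V := by
    intro w hw
    exact ((differentiableOn_const _).sub (differentiable_apply j).differentiableOn |>.inv
      fun z hz => hsub_ne z hz w hw).smul ((differentiableOn_const _).smul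
      ((hG.comp (differentiable_update_left j w).differentiableOn
        fun z hz => hupd z hz w (sphere_subset_closedBall hw)).sub
      (hG.comp (differentiable_update_left j (b j)).differentiableOn hcenter)))
  have hV₀ : V ∈ 𝓝 z₀ := hV.mem_nhds ⟨hz₀, hz₀ρ⟩
  have hrep : EqOn (coordDslope G b j)
      (fun z => (2 * Real.pi * Complex.I)⁻¹ • ∮ w in C(b j, ρ), f z w) V := fun z hz =>
    coordDslope_eq_circleIntegral hG hz.1 hz.2 hρr
  have hint : DifferentiableOn ℂ
      (fun z => (2 * Real.pi * Complex.I)⁻¹ • ∮ w in C(b j, ρ), f z w) V :=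
    (differentiableOn_circleIntegral_of_continuousOn_prod hρ.le hV hcont hdiff).const_smul _
  exact ((hint.differentiableAt hV₀).congr_of_eventuallyEq
    (eventually_of_mem hV₀ hrep)).differentiableWithinAt

end Polydisc

section Telescoping

variable {n : ℕ}

def replaceBelow (b z : Fin n → ℂ) (k : ℕ) : Fin n → ℂ := fun i => if (i : ℕ) < k then b i else z i

theorem replaceBelow_zero (b z : Fin n → ℂ) : replaceBelow b z 0 = z :=
  funext fun _ => if_neg (Nat.not_lt_zero _)

theorem replaceBelow_update (b z : Fin n → ℂ) (j : Fin n) :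
    replaceBelow b (update z j (b j)) j = replaceBelow b z (j + 1) := by
  funext i
  rcases eq_or_ne i j with rfl | hij
  · simp [replaceBelow]
  · have : (i : ℕ) ≠ j := Fin.val_ne_of_ne hij
    simp only [replaceBelow, update_of_ne hij]
    split_ifs <;> first | rfl | omega

theorem differentiable_replaceBelow (b : Fin n → ℂ) (k : ℕ) :
    Differentiable ℂ fun z => replaceBelow b z k :=
  differentiable_pi.2 fun i => by
    simp only [replaceBelow]
    split_ifs <;> fun_prop

theorem replaceBelow_mem_polydisc {b z : Fin n → ℂ} {r : Fin n → ℝ} (hz : z ∈ polydisc b r)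
    (k : ℕ) : replaceBelow b z k ∈ polydisc b r := by
  intro i
  simp only [replaceBelow]
  split_ifs
  · simpa using (norm_nonneg _).trans_lt (hz i)
  · exact hz i

theorem sum_sub_mul_coordDslope_replaceBelow {q : ℕ} (hqn : q ≤ n) (f : (Fin n → ℂ) → ℂ)
    (b z : Fin n → ℂ) :
    ∑ j : Fin q, (z (Fin.castLE hqn j) - b (Fin.castLE hqn j)) *
        coordDslope (fun z => f (replaceBelow b z j)) b (Fin.castLE hqn j) z
      = f z - f (replaceBelow b z q) := by
  have hstep : ∀ j : Fin q, (z (Fin.castLE hqn j) - b (Fin.castLE hqn j)) *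
        coordDslope (fun z => f (replaceBelow b z j)) b (Fin.castLE hqn j) z
      = f (replaceBelow b z j) - f (replaceBelow b z (j + 1)) := fun j => by
    rw [← smul_eq_mul, sub_smul_coordDslope]
    exact congrArg (_ - f ·) (replaceBelow_update b z (Fin.castLE hqn j))
  rw [Finset.sum_congr rfl fun j _ => hstep j,
    Fin.sum_univ_eq_sum_range (fun k => f (replaceBelow b z k) - f (replaceBelow b z (k + 1))),
    Finset.sum_range_sub', replaceBelow_zero]

end Telescoping

theorem stmt_1_general (n q : ℕ) (hqn : q ≤ n)
    (b : Fin n → ℂ) (r : Fin n → ℝ) (hr : ∀ j, 0 < r j)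
    (f : (Fin n → ℂ) → ℂ)
    (hf : DifferentiableOn ℂ f {z | ∀ j, ‖z j - b j‖ < r j}) :
    ∃ (h : Fin q → (Fin n → ℂ) → ℂ)
      (g : ({j : Fin n // q ≤ (j : ℕ)} → ℂ) → ℂ),
      (∀ j, DifferentiableOn ℂ (h j) {z | ∀ j, ‖z j - b j‖ < r j}) ∧
      DifferentiableOn ℂ g
        {w : {j : Fin n // q ≤ (j : ℕ)} → ℂ |
          ∀ j, ‖w j - b j.val‖ < r j.val} ∧
      ∀ z ∈ {z : Fin n → ℂ | ∀ j, ‖z j - b j‖ < r j},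
        f z = (∑ j : Fin q, (z (Fin.castLE hqn j) - b (Fin.castLE hqn j)) * h j z)
          + g (fun j => z j.val) := by
  let extend : ({j : Fin n // q ≤ (j : ℕ)} → ℂ) → Fin n → ℂ :=
    fun w i => if hi : q ≤ (i : ℕ) then w ⟨i, hi⟩ else b i
  refine ⟨fun j => coordDslope (fun z => f (replaceBelow b z j)) b (Fin.castLE hqn j),
    fun w => f (extend w), fun j => ?_, ?_, fun z _ => ?_⟩
  · exact differentiableOn_coordDslope (hf.comp (differentiable_replaceBelow b j).differentiableOn
      fun z hz => replaceBelow_mem_polydisc hz j) _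
  · refine hf.comp (differentiable_pi.2 fun i => ?_).differentiableOn fun w hw i => ?_
    · by_cases hi : q ≤ (i : ℕ) <;> simp only [extend, hi, dite_true, dite_false] <;> fun_prop
    · by_cases hi : q ≤ (i : ℕ) <;> simp only [extend, hi, dite_true, dite_false]
      · exact hw _
      · simpa using hr i
  · have hext : extend (fun j => z j.val) = replaceBelow b z q := by
      funext i
      by_cases hi : q ≤ (i : ℕ) <;> simp [extend, replaceBelow, hi]
    dsimp only
    rw [sum_sub_mul_coordDslope_replaceBelow, hext]
    ring

/-- Division of a holomorphic function on a polydisc by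
`z₁ - b₁, …, z_q - b_q` with remainder depending only on the last `n - q` variables. -/
theorem stmt_1 (n q : ℕ) (hq1 : 1 ≤ q) (hqn : q ≤ n)
    (b : Fin n → ℂ) (r : Fin n → ℝ) (hr : ∀ j, 0 < r j)
    (f : (Fin n → ℂ) → ℂ)
    (hf : DifferentiableOn ℂ f {z | ∀ j, ‖z j - b j‖ < r j}) :
    ∃ (h : Fin q → (Fin n → ℂ) → ℂ)
      (g : ({j : Fin n // q ≤ (j : ℕ)} → ℂ) → ℂ),
      (∀ j, DifferentiableOn ℂ (h j) {z | ∀ j, ‖z j - b j‖ < r j}) ∧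
      DifferentiableOn ℂ g
        {w : {j : Fin n // q ≤ (j : ℕ)} → ℂ |
          ∀ j, ‖w j - b j.val‖ < r j.val} ∧
      ∀ z ∈ {z : Fin n → ℂ | ∀ j, ‖z j - b j‖ < r j},
        f z = (∑ j : Fin q, (z (Fin.castLE hqn j) - b (Fin.castLE hqn j)) * h j z)
          + g (fun j => z j.val) :=
  stmt_1_general n q hqn b r hr f hf
end

section
/- Let PΔ ⊆ ℂⁿ be an open polydisc centered at 0, let 1 ≤ q ≤ n, and let N ≥ q. Set σ_j(z) = z_j for 1 ≤ j ≤ q and σ_i(z) = Σ_{j=1}^q a_{ij}(z)·z_j for q+1 ≤ i ≤ N, where the a_{ij} are holomorphic on PΔ. Define the N-tuples τ_{jk} (1 ≤ j < k ≤ q) with −σ_k in slot j, σ_j in slot k, and 0 elsewhere, and φ_i = (−a_{i1}, …, −a_{iq}, 0, …, 0, 1 in slot i, 0, …, 0) for q+1 ≤ i ≤ N. Then for every b ∈ PΔ and every N-tuple (f₁, …, f_N) of functions holomorphic in a neighborhood of b with Σ_{j=1}^N f_j·σ_j = 0 near b, there exist holomorphic functions b_{jk} (1 ≤ j < k ≤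 q) in a neighborhood of b such that (f₁, …, f_N) = Σ_{1≤j<k≤q} b_{jk}·τ_{jk} + Σ_{i=q+1}^N f_i·φ_i in a neighborhood of b. -/
/-!
Put `g_l = f_l + ∑_{i > q} f_i a_{il}` for `l ≤ q`. The relation `∑ f_j σ_j = 0` becomes
`∑_l g_l z_l = 0`, and the claimed decomposition of `f` amounts to `g_l = ∑_k B_{kl} z_k` for a
holomorphic alternating matrix `B`: exactness of the Koszul complex of `z_1, …, z_q` at the
relations, which is proved near `b` by induction on `q`. If `b_q ≠ 0`, divide by `z_q`.
If `b_q = 0`, Hadamard's lemma `g_l(z) = g_l(z|_{z_q = 0}) + z_q c_l(z)`, with `c_l` holomorphic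
because it is a Cauchy integral in the variable `z_q`, reduces the first `q - 1` components to the
induction hypothesis; the relation then forces `g_q = -∑_{l < q} c_l z_l` off the hyperplane
`z_q = 0`, hence everywhere by continuity.
-/

open Metric Filter Topology Function MeasureTheory Finset

theorem update_mem_closedBall {ι : Type*} [Fintype ι] [DecidableEq ι] {X : ι → Type*}
    [∀ i, PseudoMetricSpace (X i)] {z b : ∀ i, X i} {r : ℝ} (hz : z ∈ closedBall b r) {m : ι}
    {w : X m} (hw : dist w (b m) ≤ r) : update z m w ∈ closedBall b r := by
  refine (dist_pi_le_iff (dist_nonneg.trans hw)).2 fun j ↦ ?_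
  rcases eq_or_ne j m with rfl | hj
  · simpa using hw
  · simpa [update_of_ne hj] using (dist_le_pi_dist z b j).trans hz

theorem hasFDerivAt_update_const {ι : Type*} [Fintype ι] [DecidableEq ι] (z : ι → ℂ) (m : ι)
    (w : ℂ) :
    HasFDerivAt (fun y : ι → ℂ ↦ update y m w)
      (ContinuousLinearMap.pi fun j ↦ if j = m then 0 else ContinuousLinearMap.proj (R := ℂ) j)
      z := by
  refine hasFDerivAt_pi.2 fun j ↦ ?_
  by_cases hj : j = m
  · subst hj
    simpa using hasFDerivAt_const w z
  · simpa [update_of_ne hj, hj] using hasFDerivAt_apply j z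

theorem tendsto_update_zero_nhds {ι : Type*} [DecidableEq ι] {b : ι → ℂ} {m : ι}
    (hb : b m = 0) :
    Tendsto (fun z ↦ update z m 0) (𝓝 b) (𝓝 b) := by
  have hcont : Continuous fun z : ι → ℂ ↦ update z m (0 : ℂ) :=
    continuous_id.update m continuous_const
  simpa [update_eq_self_iff (f := b) (a := m) |>.2 hb.symm] using hcont.tendsto b

theorem differentiableOn_intervalIntegral_of_norm_le {E F : Type*} [NormedAddCommGroup E]
    [NormedSpace ℂ E] [NormedAddCommGroup F] [NormedSpace ℂ F] {V : Set E} (hV : IsOpen V)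
    {G : E → ℝ → F} {G' : E → ℝ → E →L[ℂ] F} {a b M : ℝ}
    (hG : ∀ z ∈ V, Continuous (G z))
    (hG' : ∀ z ∈ V, ∀ θ, HasFDerivAt (G · θ) (G' z θ) z)
    (hG'_meas : ∀ z ∈ V, AEStronglyMeasurable (G' z))
    (hM : ∀ z ∈ V, ∀ θ, ‖G z θ‖ ≤ M) :
    DifferentiableOn ℂ (fun z ↦ ∫ θ in a..b, G z θ) V := by
  intro x hx
  obtain ⟨r, hr, hxr⟩ := isOpen_iff.1 hV x hx
  have hsub : ∀ z ∈ ball x (r / 2), ball z (r / 2) ⊆ V := fun z hz ↦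
    (ball_subset_ball' (by rw [mem_ball] at hz; linarith)).trans hxr
  -- Cauchy's estimate turns the uniform bound on `G` into one on its derivative.
  have hbound : ∀ θ, ∀ z ∈ ball x (r / 2), ‖G' z θ‖ ≤ 2 * M / (r / 2) := by
    intro θ z hz
    have hzV := hsub z hz (mem_ball_self (by positivity))
    rw [← (hG' z hzV θ).fderiv]
    refine Complex.norm_fderiv_le_div_of_mapsTo_ball
      (fun y hy ↦ (hG' y (hsub z hz hy) θ).differentiableAt.differentiableWithinAt)
      (fun y hy ↦ ?_) (by positivity)
    rw [mem_closedBall, dist_eq_norm]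
    linarith [norm_sub_le (G y θ) (G z θ), hM y (hsub z hz hy) θ, hM z hzV θ]
  have hderiv := intervalIntegral.hasFDerivAt_integral_of_dominated_of_fderiv_le
    (μ := volume) (a := a) (b := b) (ball_mem_nhds x (half_pos hr))
    (eventually_of_mem (hV.mem_nhds hx) fun z hz ↦ (hG z hz).aestronglyMeasurable)
    ((hG x hx).intervalIntegrable a b) (hG'_meas x hx).restrict
    (Eventually.of_forall fun θ _ ↦ hbound θ) intervalIntegrable_const
    (Eventually.of_forall fun θ _ z hz ↦ hG' z (hsub z hz (mem_ball_self (by positivity))) θ)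
  exact hderiv.differentiableAt.differentiableWithinAt

theorem DiffContOnCl.sub_eq_smul_circleAverage {E : Type*} [NormedAddCommGroup E]
    [NormedSpace ℂ E] [CompleteSpace E] {φ : ℂ → E} {R : ℝ} {s : ℂ}
    (hφ : DiffContOnCl ℂ φ (ball 0 R)) (hs : ‖s‖ < R) :
    φ s - φ 0 = s • Real.circleAverage (fun w ↦ (w - s)⁻¹ • φ w) 0 R := by
  have hR : 0 < R := (norm_nonneg s).trans_lt hs
  have hcont : ContinuousOn φ (sphere 0 R) :=
    hφ.continuousOn.mono (by rw [closure_ball _ hR.ne']; exact sphere_subset_closedBall)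
  have hne : ∀ w ∈ sphere (0 : ℂ) R, w - s ≠ 0 := fun w hw h ↦ by
    rw [sub_eq_zero] at h; subst h; simp_all
  rw [← abs_of_pos hR] at hφ
  have hs' : s ∈ ball (0 : ℂ) |R| := by simpa [abs_of_pos hR] using hs
  rw [← hφ.circleAverage_smul_div hs', ← hφ.circleAverage, ← Real.circleAverage_fun_smul,
    ← Real.circleAverage_fun_sub]
  · refine Real.circleAverage_congr_sphere fun w hw ↦ ?_
    rw [abs_of_pos hR] at hw
    have := hne w hw
    rw [smul_smul, sub_zero]
    nth_rewrite 2 [← one_smul ℂ (φ w)]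
    rw [← sub_smul]
    congr 1
    field_simp
    ring
  · exact (((continuousOn_id.sub continuousOn_const).div (continuousOn_id.sub continuousOn_const)
      hne).smul hcont).circleIntegrable hR.le
  · exact hcont.circleIntegrable hR.le

section Hadamard

variable {ι : Type*} [Fintype ι] [DecidableEq ι]

theorem differentiableOn_circleAverage_inv_sub_mul_update {h : (ι → ℂ) → ℂ} {m : ι}
    {V : Set (ι → ℂ)} (hV : IsOpen V) {R M : ℝ} (hR : 0 ≤ R)
    (hh : ∀ z ∈ V, ∀ w ∈ sphere (0 : ℂ) R, DifferentiableAt ℂ h (update z m w))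
    (hne : ∀ z ∈ V, z m ∉ sphere (0 : ℂ) R)
    (hM : ∀ z ∈ V, ∀ w ∈ sphere (0 : ℂ) R, ‖(w - z m)⁻¹ * h (update z m w)‖ ≤ M) :
    DifferentiableOn ℂ
      (fun z ↦ Real.circleAverage (fun w ↦ (w - z m)⁻¹ * h (update z m w)) 0 R) V := by
  have hcirc : ∀ θ, circleMap 0 R θ ∈ sphere (0 : ℂ) R := circleMap_mem_sphere 0 hR
  have hsub : ∀ z ∈ V, ∀ θ, circleMap 0 R θ - z m ≠ 0 := fun z hz θ h0 ↦
    hne z hz (sub_eq_zero.1 h0 ▸ hcirc θ)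
  have hu : ∀ z : ι → ℂ, Continuous fun θ ↦ update z m (circleMap 0 R θ) := fun z ↦
    continuous_const.update m (continuous_circleMap 0 R)
  have hhu : ∀ z ∈ V, Continuous fun θ ↦ h (update z m (circleMap 0 R θ)) :=
    fun z hz ↦ continuous_iff_continuousAt.2 fun θ ↦ (hh z hz _ (hcirc θ)).continuousAt.comp
      (f := fun θ ↦ update z m (circleMap 0 R θ)) (hu z).continuousAt
  obtain ⟨P, hP⟩ : ∃ P : (ι → ℂ) →L[ℂ] (ι → ℂ), ∀ z w,
      HasFDerivAt (fun y : ι → ℂ ↦ update y m w) P z :=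
    ⟨_, fun z w ↦ hasFDerivAt_update_const z m w⟩
  simp only [Real.circleAverage_def]
  -- The derivative `G'` is written out so that its measurability in `θ` can be read off.
  refine DifferentiableOn.const_smul (differentiableOn_intervalIntegral_of_norm_le (M := M)
    (G' := fun z θ ↦
      (circleMap 0 R θ - z m)⁻¹ • (fderiv ℂ h (update z m (circleMap 0 R θ))).comp P +
        h (update z m (circleMap 0 R θ)) •
          (((circleMap 0 R θ - z m) ^ 2)⁻¹ • ContinuousLinearMap.proj (R := ℂ) m))
    hV (fun z hz ↦ ((continuous_circleMap 0 R).sub continuous_const).inv₀ (hsub z hz) |>.mul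
      (hhu z hz)) (fun z hz θ ↦ ?_) (fun z hz ↦ ?_) (fun z hz θ ↦ hM z hz _ (hcirc θ))) _
  · have hk : HasDerivAt (fun s : ℂ ↦ (circleMap 0 R θ - s)⁻¹)
        ((circleMap 0 R θ - z m) ^ 2)⁻¹ (z m) := by
      simpa using ((hasDerivAt_id (z m)).const_sub (circleMap 0 R θ)).fun_inv (hsub z hz θ)
    exact (hk.comp_hasFDerivAt (f := fun y : ι → ℂ ↦ y m) z (hasFDerivAt_apply m z)).mul
      ((hh z hz _ (hcirc θ)).hasFDerivAt.comp z (hP z _))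
  · have hD : Measurable fun θ ↦ fderiv ℂ h (update z m (circleMap 0 R θ)) :=
      (measurable_fderiv ℂ h).comp (hu z).measurable
    have hinv := ((continuous_circleMap 0 R).sub continuous_const).inv₀ (hsub z hz)
    have hinv2 := (((continuous_circleMap 0 R).sub continuous_const).pow 2).inv₀
      fun θ ↦ pow_ne_zero 2 (hsub z hz θ)
    exact (hinv.aestronglyMeasurable.smul
      ((continuous_id.clm_comp_const P).measurable.comp hD).aestronglyMeasurable).add
      ((hhu z hz).aestronglyMeasurable.smul (hinv2.smul continuous_const).aestronglyMeasurable)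

theorem exists_eq_update_zero_add_mul {h : (ι → ℂ) → ℂ} {b : ι → ℂ} {m : ι}
    (hh : ∀ᶠ z in 𝓝 b, DifferentiableAt ℂ h z) (hbm : b m = 0) :
    ∃ c : (ι → ℂ) → ℂ, (∀ᶠ z in 𝓝 b, DifferentiableAt ℂ c z) ∧
      ∀ᶠ z in 𝓝 b, h z = h (update z m 0) + z m * c z := by
  obtain ⟨ε, hε, hdiff⟩ := Metric.eventually_nhds_iff_ball.1 hh
  set ρ := ε / 4 with hρ_def
  have hρ : 0 < ρ := by positivity
  have hρε : 3 * ρ < ε := by rw [hρ_def]; linarith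
  have hzm : ∀ z ∈ ball b (2 * ρ), ‖z m‖ < 2 * ρ := fun z hz ↦ by
    simpa [hbm] using (dist_le_pi_dist z b m).trans_lt hz
  have hmem : ∀ z ∈ ball b (2 * ρ), ∀ w : ℂ, ‖w‖ ≤ 3 * ρ → update z m w ∈ closedBall b (3 * ρ) :=
    fun z hz w hw ↦ update_mem_closedBall
      (ball_subset_closedBall (ball_subset_ball (by linarith) hz)) (by simpa [hbm] using hw)
  have hdiff' : ∀ z ∈ ball b (2 * ρ), ∀ w : ℂ, ‖w‖ ≤ 3 * ρ → DifferentiableAt ℂ h (update z m w) :=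
    fun z hz w hw ↦ hdiff _ (closedBall_subset_ball hρε (hmem z hz w hw))
  obtain ⟨M, hM⟩ := (isCompact_closedBall b (3 * ρ)).exists_bound_of_continuousOn fun y hy ↦
    (hdiff y (closedBall_subset_ball hρε hy)).continuousAt.continuousWithinAt
  refine ⟨fun z ↦ Real.circleAverage (fun w ↦ (w - z m)⁻¹ * h (update z m w)) 0 (3 * ρ), ?_, ?_⟩
  · refine eventually_of_mem (ball_mem_nhds b (by positivity : 0 < 2 * ρ)) fun z hz ↦
      (differentiableOn_circleAverage_inv_sub_mul_update (M := ρ⁻¹ * M) isOpen_ball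
        (by positivity) (fun z hz w hw ↦ hdiff' z hz w (mem_sphere_zero_iff_norm.1 hw).le)
        (fun z hz hw ↦ ?_) (fun z hz w hw ↦ ?_)).differentiableAt (isOpen_ball.mem_nhds hz)
    · linarith [hzm z hz, mem_sphere_zero_iff_norm.1 hw]
    · have hw' := mem_sphere_zero_iff_norm.1 hw
      rw [norm_mul, norm_inv]
      refine mul_le_mul (inv_anti₀ hρ ?_) (hM _ (hmem z hz w hw'.le)) (norm_nonneg _)
        (by positivity)
      linarith [norm_sub_norm_le w (z m), hzm z hz]
  · filter_upwards [ball_mem_nhds b (by positivity : 0 < 2 * ρ)] with z hz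
    have hφ : DiffContOnCl ℂ (fun w ↦ h (update z m w)) (ball 0 (3 * ρ)) := by
      refine DifferentiableOn.diffContOnCl fun w hw ↦ ?_
      rw [closure_ball _ (by positivity), mem_closedBall, dist_zero_right] at hw
      exact ((hdiff' z hz w hw).comp w (hasFDerivAt_update z w).differentiableAt)
        |>.differentiableWithinAt
    have := hφ.sub_eq_smul_circleAverage ((hzm z hz).trans (by linarith))
    simp only [update_eq_self, smul_eq_mul] at this
    rw [← this]
    ring

end Hadamard

theorem eventually_eq_zero_of_eventually_apply_mul_eq_zero {ι : Type*} {ψ : (ι → ℂ) → ℂ}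
    {b : ι → ℂ} {m : ι} (hψ : ∀ᶠ z in 𝓝 b, ContinuousAt ψ z)
    (h : ∀ᶠ z in 𝓝 b, z m * ψ z = 0) :
    ∀ᶠ z in 𝓝 b, ψ z = 0 := by
  obtain ⟨U, hU, hUo, hbU⟩ := _root_.eventually_nhds_iff.1 (hψ.and h)
  have hdense : Dense {z : ι → ℂ | z m ≠ 0} :=
    (dense_compl_singleton (0 : ℂ)).preimage (isOpenMap_eval m)
  refine eventually_of_mem (hUo.mem_nhds hbU) (Set.EqOn.of_subset_closure (f := ψ) (g := 0)
    (s := U ∩ {z | z m ≠ 0}) (fun z hz ↦ ?_) (fun z hz ↦ (hU z hz).1.continuousWithinAt)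
    continuousOn_const Set.inter_subset_left (hdense.open_subset_closure_inter hUo))
  exact (mul_eq_zero.1 (hU z hz.1).2).resolve_left hz.2

section Koszul

variable {ι : Type*} [Fintype ι] {q : ℕ}

/-- Near `b`, `g = ∑_{j < k} B_{jk} τ_{jk}` for a holomorphic alternating matrix `B`, where `τ_{jk}`
is the Koszul relation of the coordinates `z (e 0), …, z (e (q - 1))`. -/
def IsKoszulCombinationNear (e : Fin q → ι) (b : ι → ℂ) (g : Fin q → (ι → ℂ) → ℂ) : Prop :=
  ∃ B : Fin q → Fin q → (ι → ℂ) → ℂ, (∀ j k, B j k = -B k j) ∧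
    (∀ᶠ z in 𝓝 b, ∀ j k, DifferentiableAt ℂ (B j k) z) ∧
    ∀ᶠ z in 𝓝 b, ∀ l, g l z = ∑ k, B k l z * z (e k)

theorem isKoszulCombinationNear_of_apply_ne_zero {e : Fin q → ι} {b : ι → ℂ}
    {g : Fin q → (ι → ℂ) → ℂ} (hg : ∀ᶠ z in 𝓝 b, ∀ l, DifferentiableAt ℂ (g l) z)
    (hrel : ∀ᶠ z in 𝓝 b, ∑ l, g l z * z (e l) = 0) {m : Fin q} (hm : b (e m) ≠ 0) :
    IsKoszulCombinationNear e b g := by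
  have hne : ∀ᶠ z in 𝓝 b, z (e m) ≠ 0 :=
    (continuous_apply (e m)).continuousAt.eventually_ne hm
  refine ⟨fun k l z ↦ ((if k = m then g l z else 0) - (if l = m then g k z else 0)) / z (e m),
    fun j k ↦ funext fun z ↦ by simp only [Pi.neg_apply]; ring, ?_, ?_⟩
  · filter_upwards [hg, hne] with z hgz hz j k
    have hnum : ∀ k l, DifferentiableAt ℂ (fun z ↦ if k = m then g l z else 0) z := by
      intro k l
      split_ifs
      exacts [hgz l, differentiableAt_const 0]
    have hcoord : DifferentiableAt ℂ (fun y : ι → ℂ ↦ y (e m)) z := by fun_prop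
    simpa only [div_eq_mul_inv] using ((hnum j k).fun_sub (hnum k j)).fun_mul (hcoord.fun_inv hz)
  · filter_upwards [hrel, hne] with z hz hzm l
    simp only [sub_div, sub_mul, sum_sub_distrib, ite_div, ite_mul, zero_div, zero_mul,
      sum_ite_eq', mem_univ, if_true]
    split_ifs with hl
    · subst hl
      have : ∑ k, g k z / z (e l) * z (e k) = (∑ k, g k z * z (e k)) / z (e l) := by
        rw [sum_div]
        exact sum_congr rfl fun k _ ↦ div_mul_eq_mul_div _ _ _
      rw [this, hz]
      field_simp
      ring
    · simp [hzm]

theorem isKoszulCombinationNear_succ {e : Fin (q + 1) → ι} {b : ι → ℂ}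
    {g : Fin (q + 1) → (ι → ℂ) → ℂ} {B : Fin q → Fin q → (ι → ℂ) → ℂ}
    {c : Fin q → (ι → ℂ) → ℂ} (hB : ∀ j k, B j k = -B k j)
    (hB_diff : ∀ᶠ z in 𝓝 b, ∀ j k, DifferentiableAt ℂ (B j k) z)
    (hc_diff : ∀ᶠ z in 𝓝 b, ∀ l, DifferentiableAt ℂ (c l) z)
    (hcast : ∀ᶠ z in 𝓝 b, ∀ l, g (Fin.castSucc l) z =
      ∑ k, B k l z * z (e (Fin.castSucc k)) + c l z * z (e (Fin.last q)))
    (hlast : ∀ᶠ z in 𝓝 b, g (Fin.last q) z = -∑ k, c k z * z (e (Fin.castSucc k))) :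
    IsKoszulCombinationNear e b g := by
  refine ⟨Fin.snoc (fun j ↦ Fin.snoc (B j) (-c j)) (Fin.snoc c 0), fun j k ↦ ?_, ?_, ?_⟩
  · induction j using Fin.lastCases <;> induction k using Fin.lastCases <;>
      simp only [Fin.snoc_castSucc, Fin.snoc_last, neg_neg, neg_zero]
    exact hB _ _
  · filter_upwards [hB_diff, hc_diff] with z hBz hcz j k
    induction j using Fin.lastCases <;> induction k using Fin.lastCases <;> simp [hBz, hcz]
  · filter_upwards [hcast, hlast] with z hcz hlz l
    induction l using Fin.lastCases <;> simp [Fin.sum_univ_castSucc, hcz, hlz]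

variable [DecidableEq ι]

theorem isKoszulCombinationNear_of_apply_last_eq_zero {e : Fin (q + 1) → ι} (he : Injective e)
    {b : ι → ℂ} {g : Fin (q + 1) → (ι → ℂ) → ℂ}
    (hg : ∀ᶠ z in 𝓝 b, ∀ l, DifferentiableAt ℂ (g l) z)
    (hrel : ∀ᶠ z in 𝓝 b, ∑ l, g l z * z (e l) = 0) (hb : b (e (Fin.last q)) = 0)
    (ih : ∀ g' : Fin q → (ι → ℂ) → ℂ, (∀ᶠ z in 𝓝 b, ∀ l, DifferentiableAt ℂ (g' l) z) →
      (∀ᶠ z in 𝓝 b, ∑ l, g' l z * z (e (Fin.castSucc l)) = 0) →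
      IsKoszulCombinationNear (e ∘ Fin.castSucc) b g') :
    IsKoszulCombinationNear e b g := by
  set m := e (Fin.last q) with hm
  choose c hc_diff hc_eq using fun l ↦ exists_eq_update_zero_add_mul (hg.mono fun z hz ↦ hz l) hb
  have hT := tendsto_update_zero_nhds hb
  have hne : ∀ l : Fin q, e (Fin.castSucc l) ≠ m := fun l h ↦
    (Fin.castSucc_lt_last l).ne (he h)
  obtain ⟨B, hB, hB_diff, hB_eq⟩ := ih (fun l z ↦ g (Fin.castSucc l) (update z m 0))
    ((hT.eventually hg).mono fun z hz l ↦
      (hz _).comp z (hasFDerivAt_update_const z m 0).differentiableAt)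
    ((hT.eventually hrel).mono fun z hz ↦ by
      simpa [Fin.sum_univ_castSucc, update_of_ne (hne _), m] using hz)
  have hψ : ∀ᶠ z in 𝓝 b,
      ∑ l, c (Fin.castSucc l) z * z (e (Fin.castSucc l)) + g (Fin.last q) z = 0 := by
    refine eventually_eq_zero_of_eventually_apply_mul_eq_zero (m := m) ?_ ?_
    · filter_upwards [eventually_all.2 hc_diff, hg] with z hcz hgz
      exact ((DifferentiableAt.fun_sum fun l _ ↦ (hcz _).fun_mul
        (differentiableAt_apply (𝕜 := ℂ) _ z)).fun_add (hgz _)).continuousAt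
    · filter_upwards [hrel, hT.eventually hrel, eventually_all.2 hc_eq] with z h1 h2 h3
      rw [Fin.sum_univ_castSucc] at h1
      simp only [Fin.sum_univ_castSucc, ← hm, update_self, mul_zero, add_zero,
        update_of_ne (hne _)] at h2
      have hsplit : ∑ l, g (Fin.castSucc l) z * z (e (Fin.castSucc l)) =
          ∑ l, g (Fin.castSucc l) (update z m 0) * z (e (Fin.castSucc l)) +
            z m * ∑ l, c (Fin.castSucc l) z * z (e (Fin.castSucc l)) := by
        rw [mul_sum, ← sum_add_distrib]
        exact sum_congr rfl fun l _ ↦ by rw [h3]; ring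
      linear_combination h1 - h2 - hsplit
  refine isKoszulCombinationNear_succ (c := fun l ↦ c (Fin.castSucc l)) hB hB_diff
    (eventually_all.2 fun l ↦ hc_diff _) ?_ ?_
  · filter_upwards [hB_eq, eventually_all.2 hc_eq] with z h1 h2 l
    rw [h2, h1 l]
    simp only [comp_apply]
    ring
  · filter_upwards [hψ] with z hz
    linear_combination hz

theorem isKoszulCombinationNear_of_sum_mul_eq_zero {e : Fin q → ι} (he : Injective e)
    {b : ι → ℂ} {g : Fin q → (ι → ℂ) → ℂ}
    (hg : ∀ᶠ z in 𝓝 b, ∀ l, DifferentiableAt ℂ (g l) z)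
    (hrel : ∀ᶠ z in 𝓝 b, ∑ l, g l z * z (e l) = 0) :
    IsKoszulCombinationNear e b g := by
  induction q with
  | zero => exact ⟨fun _ _ ↦ 0, fun j ↦ j.elim0, .of_forall fun _ j ↦ j.elim0,
      .of_forall fun _ l ↦ l.elim0⟩
  | succ q ih =>
    by_cases hb : b (e (Fin.last q)) = 0
    · exact isKoszulCombinationNear_of_apply_last_eq_zero he hg hrel hb fun g' hg' hrel' ↦
        ih (he.comp (Fin.castSucc_injective q)) hg' hrel'
    · exact isKoszulCombinationNear_of_apply_ne_zero hg hrel hb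

end Koszul
theorem sum_eq_sum_castLE_add_sum_ite {M : Type*} [AddCommMonoid M] {q N : ℕ} (hqN : q ≤ N)
    (f : Fin N → M) :
    ∑ i, f i = ∑ l : Fin q, f (Fin.castLE hqN l) + ∑ i : Fin N, if q ≤ (i : ℕ) then f i else 0 := by
  obtain ⟨p, rfl⟩ := Nat.exists_eq_add_of_le hqN
  have hlt : ∀ l : Fin q, ¬q ≤ (l : ℕ) := fun l ↦ not_le.2 l.isLt
  simp [Fin.sum_univ_add, hlt]
  rfl

theorem sum_alternating_mul_eq_sum_triangle {R : Type*} [CommRing R] {q : ℕ}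
    {B : Fin q → Fin q → R} (hB : ∀ j k, B j k = -B k j) (hdiag : ∀ j, B j j = 0)
    (x : Fin q → R) (l : Fin q) :
    ∑ k, B k l * x k = ∑ j, ∑ k, if j < k then
      B j k * (if l = j then -x k else if l = k then x j else 0) else 0 := by
  have hsplit : ∀ j k, (if j < k then
      B j k * (if l = j then -x k else if l = k then x j else 0) else 0) =
      (if j = l then if l < k then B k l * x k else 0 else 0) +
        (if k = l then if j < l then B j l * x j else 0 else 0) := by
    intro j k
    by_cases hjk : j < k
    · by_cases hlj : l = j
      · subst hlj
        simp [hjk, hjk.ne', hB l k]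
      · by_cases hlk : l = k
        · subst hlk
          simp [hjk, hlj, Ne.symm hlj]
        · simp [hjk, hlj, hlk, Ne.symm hlj, Ne.symm hlk]
    · have h1 : ¬(j = l ∧ l < k) := fun ⟨h, h'⟩ ↦ hjk (h ▸ h')
      have h2 : ¬(k = l ∧ j < l) := fun ⟨h, h'⟩ ↦ hjk (h ▸ h')
      rw [if_neg hjk, ← ite_and, ← ite_and, if_neg h1, if_neg h2, add_zero]
  rw [sum_congr rfl fun j _ ↦ sum_congr rfl fun k _ ↦ hsplit j k]
  simp only [sum_add_distrib, sum_ite_irrel, sum_const_zero, sum_ite_eq', mem_univ, if_true]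
  rw [← sum_add_distrib]
  refine sum_congr rfl fun k _ ↦ ?_
  rcases lt_trichotomy l k with h | rfl | h
  · simp [h, not_lt.2 h.le]
  · simp [hdiag]
  · simp [h, not_lt.2 h.le]

theorem sum_mul_eq_sum_add_sum_mul {R : Type*} [CommRing R] {q N : ℕ} (hqN : q ≤ N)
    (f σ : Fin N → R) (a : Fin N → Fin q → R) (x : Fin q → R)
    (hσ₁ : ∀ l, σ (Fin.castLE hqN l) = x l)
    (hσ₂ : ∀ i : Fin N, q ≤ (i : ℕ) → σ i = ∑ l, a i l * x l) :
    ∑ j, f j * σ j =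
      ∑ l, (f (Fin.castLE hqN l) + ∑ i : Fin N, if q ≤ (i : ℕ) then f i * a i l else 0) * x l := by
  rw [sum_eq_sum_castLE_add_sum_ite hqN]
  simp only [add_mul, sum_add_distrib, hσ₁, sum_mul]
  rw [sum_comm]
  congr 1
  refine sum_congr rfl fun i _ ↦ ?_
  split_ifs with hi
  · rw [hσ₂ i hi, mul_sum]
    exact sum_congr rfl fun l _ ↦ by ring
  · simp

theorem apply_eq_sum_triangle_add_sum {R : Type*} [CommRing R] {q N : ℕ} (hqN : q ≤ N)
    {f σ : Fin N → R} {a : Fin N → Fin q → R} {x : Fin q → R} {B : Fin q → Fin q → R}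
    (hσ₁ : ∀ l, σ (Fin.castLE hqN l) = x l) (hB : ∀ j k, B j k = -B k j)
    (hdiag : ∀ j, B j j = 0)
    (hf : ∀ l, f (Fin.castLE hqN l) + ∑ i : Fin N, (if q ≤ (i : ℕ) then f i * a i l else 0) =
      ∑ k, B k l * x k)
    (l : Fin N) :
    f l = (∑ j : Fin q, ∑ k : Fin q, if j < k then
        B j k * (if (l : ℕ) = (j : ℕ) then -σ (Fin.castLE hqN k)
          else if (l : ℕ) = (k : ℕ) then σ (Fin.castLE hqN j) else 0) else 0) +
      ∑ i : Fin N, if q ≤ (i : ℕ) then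
        f i * (if hl : (l : ℕ) < q then -a i ⟨l, hl⟩ else if l = i then 1 else 0) else 0 := by
  rcases lt_or_ge (l : ℕ) q with hl | hl
  · obtain ⟨l, rfl⟩ : ∃ l' : Fin q, Fin.castLE hqN l' = l := ⟨⟨l, hl⟩, rfl⟩
    simp only [Fin.val_castLE, Fin.val_inj, hσ₁, l.isLt, dif_pos, Fin.eta]
    rw [← sum_alternating_mul_eq_sum_triangle hB hdiag, ← hf l, add_assoc, ← sum_add_distrib,
      sum_eq_zero fun i _ ↦ ?_, add_zero]
    split_ifs <;> ring
  · have hne : ∀ j : Fin q, (l : ℕ) ≠ j := fun j h ↦ absurd j.isLt (not_lt.2 (h ▸ hl))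
    simp [hne, not_lt.2 hl]
    rw [sum_eq_single l (fun i _ hi ↦ by simp [Ne.symm hi]) (by simp)]
    simp [hl]

theorem stmt_4_general (n q N : ℕ) (hqn : q ≤ n) (hqN : q ≤ N)
    (r : Fin n → ℝ)
    (a : Fin N → Fin q → (Fin n → ℂ) → ℂ)
    (ha : ∀ i j, DifferentiableOn ℂ (a i j) {z | ∀ j, ‖z j‖ < r j})
    (σ : Fin N → (Fin n → ℂ) → ℂ)
    (hσ1 : ∀ (i : Fin N) (h : (i : ℕ) < q), ∀ z : Fin n → ℂ,
      σ i z = z ⟨(i : ℕ), lt_of_lt_of_le h hqn⟩)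
    (hσ2 : ∀ i : Fin N, q ≤ (i : ℕ) → ∀ z ∈ {z : Fin n → ℂ | ∀ j, ‖z j‖ < r j},
      σ i z = ∑ j : Fin q, a i j z * z (Fin.castLE hqn j)) :
    ∀ b ∈ {z : Fin n → ℂ | ∀ j, ‖z j‖ < r j},
    ∀ (Vb : Set (Fin n → ℂ)) (f : Fin N → (Fin n → ℂ) → ℂ),
      IsOpen Vb → b ∈ Vb → Vb ⊆ {z : Fin n → ℂ | ∀ j, ‖z j‖ < r j} →
      (∀ j, DifferentiableOn ℂ (f j) Vb) →
      (∀ z ∈ Vb, ∑ j : Fin N, f j z * σ j z = 0) →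
      ∃ (V : Set (Fin n → ℂ)) (bc : Fin q → Fin q → (Fin n → ℂ) → ℂ),
        IsOpen V ∧ b ∈ V ∧ V ⊆ Vb ∧
        (∀ j k : Fin q, j < k → DifferentiableOn ℂ (bc j k) V) ∧
        ∀ l : Fin N, ∀ z ∈ V,
          f l z =
            (∑ j : Fin q, ∑ k : Fin q,
              if j < k then
                bc j k z *
                  (if (l : ℕ) = (j : ℕ) then -σ (Fin.castLE hqN k) z
                   else if (l : ℕ) = (k : ℕ) then σ (Fin.castLE hqN j) z else 0)
              else 0)
            + ∑ i : Fin N,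
                if q ≤ (i : ℕ) then
                  f i z *
                    (if hl : (l : ℕ) < q then -(a i ⟨(l : ℕ), hl⟩ z)
                     else if l = i then 1 else 0)
                else 0 := by
  intro b _ Vb f hVb hbVb hVbPD hf hrel
  have hVb_nhds : ∀ᶠ z in 𝓝 b, z ∈ Vb := hVb.mem_nhds hbVb
  have hσ₁ : ∀ z (l : Fin q), σ (Fin.castLE hqN l) z = z (Fin.castLE hqn l) :=
    fun z l ↦ hσ1 _ l.isLt z
  have hg : ∀ᶠ z in 𝓝 b, ∀ l : Fin q, DifferentiableAt ℂ (fun z ↦ f (Fin.castLE hqN l) z +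
      ∑ i : Fin N, if q ≤ (i : ℕ) then f i z * a i l z else 0) z := by
    filter_upwards [hVb_nhds] with z hz l
    refine (((hf _).add (DifferentiableOn.fun_sum fun i _ ↦ ?_)).differentiableAt
      (hVb.mem_nhds hz))
    split_ifs
    exacts [(hf i).mul ((ha i l).mono hVbPD), differentiableOn_const 0]
  obtain ⟨B, hB, hB_diff, hB_eq⟩ := isKoszulCombinationNear_of_sum_mul_eq_zero
    (Fin.castLE_injective hqn) hg <| by
      filter_upwards [hVb_nhds] with z hz
      rw [← sum_mul_eq_sum_add_sum_mul hqN (f · z) (σ · z) (a · · z) _ (hσ₁ z)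
        fun i hi ↦ hσ2 i hi z (hVbPD hz)]
      exact hrel z hz
  obtain ⟨V, hV, hVo, hbV⟩ := _root_.eventually_nhds_iff.1 ((hB_diff.and hB_eq).and hVb_nhds)
  refine ⟨V, B, hVo, hbV, fun z hz ↦ (hV z hz).2,
    fun j k _ z hz ↦ ((hV z hz).1.1 j k).differentiableWithinAt, fun l z hz ↦ ?_⟩
  exact apply_eq_sum_triangle_add_sum (f := (f · z)) (σ := (σ · z)) (a := (a · · z)) hqN
    (hσ₁ z) (fun j k ↦ congrFun (hB j k) z)
    (fun j ↦ CharZero.eq_neg_self_iff.1 (congrFun (hB j j) z)) (hV z hz).1.2 l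

/-- On a polydisc centered at 0, for `σ_j = z_j` (`1 ≤ j ≤ q`) and
`σ_i = Σ_j a_{ij} z_j` (`q+1 ≤ i ≤ N`), every local relation `Σ f_j σ_j = 0` is a
holomorphic linear combination of the trivial solutions `τ_{jk}` (`1 ≤ j < k ≤ q`)
and the tuples `φ_i` (`q+1 ≤ i ≤ N`), with the coefficients of the `φ_i` being the
`f_i` themselves. -/
theorem stmt_4 (n q N : ℕ) (hq1 : 1 ≤ q) (hqn : q ≤ n) (hqN : q ≤ N)
    (r : Fin n → ℝ) (hr : ∀ j, 0 < r j)
    (a : Fin N → Fin q → (Fin n → ℂ) → ℂ)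
    (ha : ∀ i j, DifferentiableOn ℂ (a i j) {z | ∀ j, ‖z j‖ < r j})
    (σ : Fin N → (Fin n → ℂ) → ℂ)
    (hσ1 : ∀ (i : Fin N) (h : (i : ℕ) < q), ∀ z : Fin n → ℂ,
      σ i z = z ⟨(i : ℕ), lt_of_lt_of_le h hqn⟩)
    (hσ2 : ∀ i : Fin N, q ≤ (i : ℕ) → ∀ z ∈ {z : Fin n → ℂ | ∀ j, ‖z j‖ < r j},
      σ i z = ∑ j : Fin q, a i j z * z (Fin.castLE hqn j)) :
    ∀ b ∈ {z : Fin n → ℂ | ∀ j, ‖z j‖ < r j},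
    ∀ (Vb : Set (Fin n → ℂ)) (f : Fin N → (Fin n → ℂ) → ℂ),
      IsOpen Vb → b ∈ Vb → Vb ⊆ {z : Fin n → ℂ | ∀ j, ‖z j‖ < r j} →
      (∀ j, DifferentiableOn ℂ (f j) Vb) →
      (∀ z ∈ Vb, ∑ j : Fin N, f j z * σ j z = 0) →
      ∃ (V : Set (Fin n → ℂ)) (bc : Fin q → Fin q → (Fin n → ℂ) → ℂ),
        IsOpen V ∧ b ∈ V ∧ V ⊆ Vb ∧
        (∀ j k : Fin q, j < k → DifferentiableOn ℂ (bc j k) V) ∧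
        ∀ l : Fin N, ∀ z ∈ V,
          f l z =
            (∑ j : Fin q, ∑ k : Fin q,
              if j < k then
                bc j k z *
                  (if (l : ℕ) = (j : ℕ) then -σ (Fin.castLE hqN k) z
                   else if (l : ℕ) = (k : ℕ) then σ (Fin.castLE hqN j) z else 0)
              else 0)
            + ∑ i : Fin N,
                if q ≤ (i : ℕ) then
                  f i z *
                    (if hl : (l : ℕ) < q then -(a i ⟨(l : ℕ), hl⟩ z)
                     else if l = i then 1 else 0)
                else 0 :=
  stmt_4_general n q N hqn hqN r a ha σ hσ1 hσ2
end

section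
/- (Cousin decomposition.) Let F ⊆ ℂ^{n−1} be a closed cuboid, let T > δ > 0 and θ ≥ 0, and let φ be holomorphic on an open neighborhood of F × {z_n ∈ ℂ : |Re z_n| ≤ δ, |Im z_n| ≤ θ + δ}. Set E₁ = F × {z_n : −T ≤ Re z_n ≤ δ, |Im z_n| ≤ θ} and E₂ = F × {z_n : −δ ≤ Re z_n ≤ T, |Im z_n| ≤ θ}. Then there exist Φ₁ holomorphic on an open neighborhood of E₁ and Φ₂ holomorphic on an open neighborhood of E₂ such that Φ₁(z′, z_n) − Φ₂(z′, z_n) = φ(z′, z_n) for all (z′, z_n) in a neighborhood of E₁ ∩ E₂. -/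
/-!
Choose an open `V ⊇ F` and a rectangle `R = [-A, A] × [-B, B]` with `A > δ`, `B > θ` and
`V × R ⊆ U` (tube lemma, then enlarge the rectangle by a scaling factor `s > 1`). For `z ∈ V`
and `w` inside `R`, Cauchy's formula in the last variable writes `φ (z, w)` as the integral of
`φ (z, ζ) / (ζ - w)` over `∂R`. Split `∂R` into its left side and the rest: the integral `Φ₁`
over the bottom, right and top sides is holomorphic off those sides, in particular near `E₁`
(where `Re ≤ δ < A` and `|Im| ≤ θ < B`), and minus the integral `Φ₂` over the left side is
holomorphic on `Re > -A`, in particular near `E₂`. Holomorphy of these integrals in `(z, w)`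
is differentiation under the integral sign, the derivative being bounded by Cauchy estimates.
-/

open Complex Set MeasureTheory Metric
open scoped Real Interval Topology

/-- A closed cuboid in ℂ^m: a product of closed rectangles with sides parallel to the
real and imaginary axes (degenerate edges allowed). -/
def IsClosedCuboid {m : ℕ} (E : Set (Fin m → ℂ)) : Prop :=
  ∃ a b c d : Fin m → ℝ, (∀ j, a j ≤ b j) ∧ (∀ j, c j ≤ d j) ∧
    E = {z | ∀ j, a j ≤ (z j).re ∧ (z j).re ≤ b j ∧ c j ≤ (z j).im ∧ (z j).im ≤ d j}

theorem IsClosedCuboid.isCompact {m : ℕ} {E : Set (Fin m → ℂ)} (hE : IsClosedCuboid E) :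
    IsCompact E := by
  obtain ⟨a, b, c, d, -, -, rfl⟩ := hE
  convert isCompact_univ_pi fun j => (isCompact_Icc (a := a j) (b := b j)).reProdIm
    (isCompact_Icc (a := c j) (b := d j)) using 1
  ext z
  simp [mem_reProdIm, and_assoc]

theorem exists_one_lt_forall_smul_mem {E : Type*} [TopologicalSpace E] [AddCommGroup E]
    [Module ℝ E] [ContinuousSMul ℝ E] {K W : Set E} (hK : IsCompact K) (hW : IsOpen W)
    (hKW : K ⊆ W) : ∃ s : ℝ, 1 < s ∧ ∀ x ∈ K, s • x ∈ W := by
  have : ∀ᶠ s in 𝓝 (1 : ℝ), ∀ x ∈ K, s • x ∈ W :=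
    hK.eventually_forall_of_forall_eventually fun x hx =>
      (continuous_smul.tendsto ((1 : ℝ), x)).eventually (hW.mem_nhds (by simpa using hKW hx))
  obtain ⟨s, hsW, hs⟩ := ((this.filter_mono nhdsWithin_le_nhds).and
    (self_mem_nhdsWithin (s := Ioi 1))).exists
  exact ⟨s, hs, hsW⟩

theorem exists_isOpen_prod_rect_subset {H : Type*} [TopologicalSpace H] {F : Set H}
    (hF : IsCompact F) {U : Set (H × ℂ)} (hU : IsOpen U) {a b : ℝ} (ha : 0 < a) (hb : 0 < b)
    (hFU : F ×ˢ (Icc (-a) a ×ℂ Icc (-b) b) ⊆ U) :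
    ∃ V, IsOpen V ∧ F ⊆ V ∧ ∃ A B, a < A ∧ b < B ∧ V ×ˢ (Icc (-A) A ×ℂ Icc (-B) B) ⊆ U := by
  obtain ⟨V, W, hV, hW, hFV, hKW, hVW⟩ :=
    generalized_tube_lemma hF (isCompact_Icc.reProdIm isCompact_Icc) hU hFU
  obtain ⟨s, hs, hsW⟩ := exists_one_lt_forall_smul_mem (isCompact_Icc.reProdIm isCompact_Icc) hW hKW
  have hs₀ : 0 < s := one_pos.trans hs
  have hscale : ∀ {x c : ℝ}, x ∈ Icc (-(s * c)) (s * c) → s⁻¹ * x ∈ Icc (-c) c := by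
    intro x c hx
    rw [mem_Icc, ← abs_le, abs_mul, abs_inv, abs_of_pos hs₀, inv_mul_le_iff₀ hs₀]
    exact abs_le.2 hx
  refine ⟨V, hV, hFV, s * a, s * b, lt_mul_left ha hs, lt_mul_left hb hs, ?_⟩
  rintro ⟨z, w⟩ ⟨hz, hre, him⟩
  refine hVW ⟨hz, ?_⟩
  have := hsW (s⁻¹ • w) ⟨by simpa only [mem_preimage, smul_re, smul_eq_mul] using hscale hre,
    by simpa only [mem_preimage, smul_im, smul_eq_mul] using hscale him⟩
  rwa [smul_inv_smul₀ hs₀.ne'] at this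

section
variable {E : Type*} [NormedAddCommGroup E] [NormedSpace ℂ E]

/-- The integral of `f` over the positively oriented boundary of `[x₀, x₁] × [y₀, y₁]`, in the
form of `Complex.integral_boundary_rect_eq_zero_of_differentiable_on_off_countable`. -/
noncomputable def rectIntegral (f : ℂ → E) (x₀ x₁ y₀ y₁ : ℝ) : E :=
  (∫ x : ℝ in x₀..x₁, f (x + y₀ * I)) - (∫ x : ℝ in x₀..x₁, f (x + y₁ * I)) +
    I • (∫ y : ℝ in y₀..y₁, f (x₁ + y * I)) - I • ∫ y : ℝ in y₀..y₁, f (x₀ + y * I)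

theorem integral_div_eq_log_sub {σ : ℝ → ℂ} {α : ℂ} (hσ : ∀ t, HasDerivAt σ α t) {a b : ℝ}
    (hslit : ∀ t ∈ [[a, b]], σ t ∈ slitPlane) :
    ∫ t in a..b, α / σ t = log (σ b) - log (σ a) := by
  have hσc : Continuous σ := continuous_iff_continuousAt.2 fun t => (hσ t).continuousAt
  refine intervalIntegral.integral_eq_sub_of_hasDerivAt
    (fun t ht => (hσ t).clog_real (hslit t ht)) ?_
  exact (continuousOn_const.div hσc.continuousOn
    fun t ht => slitPlane_ne_zero (hslit t ht)).intervalIntegrable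

theorem log_sub_log_neg_of_im_pos {p : ℂ} (hp : 0 < p.im) : log p - log (-p) = π * I := by
  apply Complex.ext <;> simp [log_re, log_im, arg_neg_eq_arg_sub_pi_of_im_pos hp]

theorem rectIntegral_inv_sub {x₀ x₁ y₀ y₁ : ℝ} {c : ℂ} (hc : c ∈ Ioo x₀ x₁ ×ℂ Ioo y₀ y₁) :
    rectIntegral (fun ζ => (ζ - c)⁻¹) x₀ x₁ y₀ y₁ = 2 * π * I := by
  obtain ⟨⟨hx₀, hx₁⟩, hy₀, hy₁⟩ := hc
  have horiz : ∀ y : ℝ, y ≠ c.im →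
      ∫ x : ℝ in x₀..x₁, ((x : ℂ) + y * I - c)⁻¹ =
        log (x₁ + y * I - c) - log (x₀ + y * I - c) := fun y hy => by
    simp_rw [← one_div]
    refine integral_div_eq_log_sub (fun t => ?_) fun t _ => ?_
    · simpa using ((hasDerivAt_id (t : ℂ)).comp_ofReal.add_const ((y : ℂ) * I)).sub_const c
    · exact mem_slitPlane_iff.2 (Or.inr (by simpa [sub_eq_zero] using hy))
  have right : I • ∫ y : ℝ in y₀..y₁, ((x₁ : ℂ) + y * I - c)⁻¹ =
      log (x₁ + y₁ * I - c) - log (x₁ + y₀ * I - c) := by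
    rw [smul_eq_mul, ← intervalIntegral.integral_const_mul]
    simp_rw [← div_eq_mul_inv]
    refine integral_div_eq_log_sub (fun t => ?_) fun t _ => ?_
    · simpa using
        ((((hasDerivAt_id (t : ℂ)).comp_ofReal).mul_const I).const_add (x₁ : ℂ)).sub_const c
    · exact mem_slitPlane_iff.2 (Or.inl (by simpa using hx₁))
  -- The left side crosses the cut of `log (ζ - c)`, so it is integrated with `log (c - ζ)`.
  have left : I • ∫ y : ℝ in y₀..y₁, ((x₀ : ℂ) + y * I - c)⁻¹ =
      log (c - (x₀ + y₁ * I)) - log (c - (x₀ + y₀ * I)) := by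
    rw [smul_eq_mul, ← intervalIntegral.integral_const_mul]
    have : ∀ y : ℝ, I * ((x₀ : ℂ) + y * I - c)⁻¹ = -I / (c - (x₀ + y * I)) := fun y => by
      rw [div_eq_mul_inv, ← neg_sub, inv_neg]; ring
    simp_rw [this]
    refine integral_div_eq_log_sub (fun t => ?_) fun t _ => ?_
    · simpa using
        ((((hasDerivAt_id (t : ℂ)).comp_ofReal).mul_const I).const_add (x₀ : ℂ)).const_sub c
    · exact mem_slitPlane_iff.2 (Or.inl (by simpa using hx₀))
  have bottom := log_sub_log_neg_of_im_pos (p := c - (x₀ + y₀ * I)) (by simpa using hy₀)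
  have top := log_sub_log_neg_of_im_pos (p := x₀ + y₁ * I - c) (by simpa using hy₁)
  rw [neg_sub] at bottom top
  rw [rectIntegral, horiz y₀ hy₀.ne, horiz y₁ hy₁.ne', right, left]
  linear_combination bottom + top

theorem rectIntegral_dslope_eq_zero {f : ℂ → E} {x₀ x₁ y₀ y₁ : ℝ} {c : ℂ}
    (hf : DifferentiableOn ℂ f (Icc x₀ x₁ ×ℂ Icc y₀ y₁)) (hc : c ∈ Ioo x₀ x₁ ×ℂ Ioo y₀ y₁) :
    rectIntegral (dslope f c) x₀ x₁ y₀ y₁ = 0 := by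
  have hinterior : ∀ ζ ∈ Ioo x₀ x₁ ×ℂ Ioo y₀ y₁, Icc x₀ x₁ ×ℂ Icc y₀ y₁ ∈ 𝓝 ζ := fun ζ hζ =>
    Filter.mem_of_superset ((isOpen_Ioo.reProdIm isOpen_Ioo).mem_nhds hζ)
      fun w hw => ⟨Ioo_subset_Icc_self hw.1, Ioo_subset_Icc_self hw.2⟩
  have hx := (hc.1.1.trans hc.1.2).le
  have hy := (hc.2.1.trans hc.2.2).le
  refine integral_boundary_rect_eq_zero_of_differentiable_on_off_countable _ ⟨x₀, y₀⟩ ⟨x₁, y₁⟩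
    {c} (countable_singleton c) ?_ fun ζ ⟨hζ, hζc⟩ => ?_
  · show ContinuousOn _ ([[x₀, x₁]] ×ℂ [[y₀, y₁]])
    rw [uIcc_of_le hx, uIcc_of_le hy]
    exact (continuousOn_dslope (hinterior c hc)).2
      ⟨hf.continuousOn, hf.differentiableAt (hinterior c hc)⟩
  · simp only [min_eq_left hx, max_eq_right hx, min_eq_left hy, max_eq_right hy] at hζ
    exact (differentiableAt_dslope_of_ne hζc).2 (hf.differentiableAt (hinterior ζ hζ))

variable [CompleteSpace E]

theorem intervalIntegral_dslope_comp {f : ℂ → E} {c : ℂ} {σ : ℝ → ℂ} {a b : ℝ}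
    (hσ : ContinuousOn σ [[a, b]]) (hf : ContinuousOn (fun t => f (σ t)) [[a, b]])
    (hne : ∀ t ∈ [[a, b]], σ t ≠ c) :
    ∫ t in a..b, dslope f c (σ t) =
      (∫ t in a..b, (σ t - c)⁻¹ • f (σ t)) - (∫ t in a..b, (σ t - c)⁻¹) • f c := by
  have hinv : ContinuousOn (fun t => (σ t - c)⁻¹) [[a, b]] :=
    (hσ.sub continuousOn_const).inv₀ fun t ht => sub_ne_zero.2 (hne t ht)
  have h₁ : IntervalIntegrable (fun t => (σ t - c)⁻¹ • f (σ t)) volume a b :=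
    (hinv.smul hf).intervalIntegrable
  have h₂ : IntervalIntegrable (fun t => (σ t - c)⁻¹ • f c) volume a b :=
    (hinv.smul continuousOn_const).intervalIntegrable
  rw [← intervalIntegral.integral_smul_const, ← intervalIntegral.integral_sub h₁ h₂]
  refine intervalIntegral.integral_congr fun t ht => ?_
  simp only [dslope_of_ne f (hne t ht), slope_def_module, smul_sub]

theorem rectIntegral_dslope {f : ℂ → E} {x₀ x₁ y₀ y₁ : ℝ} {c : ℂ}
    (hf : ContinuousOn f (Icc x₀ x₁ ×ℂ Icc y₀ y₁)) (hc : c ∈ Ioo x₀ x₁ ×ℂ Ioo y₀ y₁) :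
    rectIntegral (dslope f c) x₀ x₁ y₀ y₁ =
      rectIntegral (fun ζ => (ζ - c)⁻¹ • f ζ) x₀ x₁ y₀ y₁ -
        rectIntegral (fun ζ => (ζ - c)⁻¹) x₀ x₁ y₀ y₁ • f c := by
  obtain ⟨⟨hx₀, hx₁⟩, hy₀, hy₁⟩ := hc
  have side : ∀ σ : ℝ → ℂ, Continuous σ → ∀ a b : ℝ,
      (∀ t ∈ [[a, b]], σ t ∈ Icc x₀ x₁ ×ℂ Icc y₀ y₁) → (∀ t, σ t ≠ c) →
      ∫ t in a..b, dslope f c (σ t) =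
        (∫ t in a..b, (σ t - c)⁻¹ • f (σ t)) - (∫ t in a..b, (σ t - c)⁻¹) • f c :=
    fun σ hσ a b hσR hne => intervalIntegral_dslope_comp hσ.continuousOn
      (hf.comp hσ.continuousOn hσR) fun t _ => hne t
  have horiz : ∀ y ∈ Icc y₀ y₁, ∀ t ∈ [[x₀, x₁]], (t : ℂ) + y * I ∈ Icc x₀ x₁ ×ℂ Icc y₀ y₁ :=
    fun y hy t ht => by
      rw [uIcc_of_le (hx₀.trans hx₁).le] at ht
      simpa [mem_reProdIm] using ⟨ht, hy⟩
  have vert : ∀ x ∈ Icc x₀ x₁, ∀ t ∈ [[y₀, y₁]], (x : ℂ) + t * I ∈ Icc x₀ x₁ ×ℂ Icc y₀ y₁ :=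
    fun x hx t ht => by
      rw [uIcc_of_le (hy₀.trans hy₁).le] at ht
      simpa [mem_reProdIm] using ⟨hx, ht⟩
  simp only [rectIntegral]
  rw [side (fun t => t + y₀ * I) (by fun_prop) x₀ x₁ (horiz y₀ (left_mem_Icc.2 (hy₀.trans hy₁).le))
      fun t h => hy₀.ne (by simpa using congrArg im h),
    side (fun t => t + y₁ * I) (by fun_prop) x₀ x₁ (horiz y₁ (right_mem_Icc.2 (hy₀.trans hy₁).le))
      fun t h => hy₁.ne' (by simpa using congrArg im h),
    side (fun t => x₁ + t * I) (by fun_prop) y₀ y₁ (vert x₁ (right_mem_Icc.2 (hx₀.trans hx₁).le))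
      fun t h => hx₁.ne' (by simpa using congrArg re h),
    side (fun t => x₀ + t * I) (by fun_prop) y₀ y₁ (vert x₀ (left_mem_Icc.2 (hx₀.trans hx₁).le))
      fun t h => hx₀.ne (by simpa using congrArg re h)]
  module

theorem rectIntegral_inv_sub_smul {f : ℂ → E} {x₀ x₁ y₀ y₁ : ℝ} {c : ℂ}
    (hf : DifferentiableOn ℂ f (Icc x₀ x₁ ×ℂ Icc y₀ y₁)) (hc : c ∈ Ioo x₀ x₁ ×ℂ Ioo y₀ y₁) :
    rectIntegral (fun ζ => (ζ - c)⁻¹ • f ζ) x₀ x₁ y₀ y₁ = (2 * π * I) • f c := by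
  have := (rectIntegral_dslope hf.continuousOn hc).symm.trans (rectIntegral_dslope_eq_zero hf hc)
  rwa [rectIntegral_inv_sub hc, sub_eq_zero] at this

end

theorem IsCompact.exists_bound_fderiv_of_differentiableOn {E F : Type*} [NormedAddCommGroup E]
    [NormedSpace ℂ E] [ProperSpace E] [NormedAddCommGroup F] [NormedSpace ℂ F]
    {f : E → F} {O K : Set E} (hK : IsCompact K) (hO : IsOpen O) (hf : DifferentiableOn ℂ f O)
    (hKO : K ⊆ O) : ∃ C, ∀ p ∈ K, ‖fderiv ℂ f p‖ ≤ C := by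
  obtain ⟨r, hr, hrO⟩ := hK.exists_cthickening_subset_open hO hKO
  obtain ⟨M, hM⟩ := hK.cthickening.exists_bound_of_continuousOn (hf.continuousOn.mono hrO)
  refine ⟨(M + M) / r, fun p hp => Complex.norm_fderiv_le_div_of_mapsTo_ball ?_ ?_ hr⟩
  · exact hf.mono (ball_subset_closedBall.trans ((closedBall_subset_cthickening hp r).trans hrO))
  · intro q hq
    rw [mem_closedBall, dist_eq_norm]
    exact (norm_sub_le _ _).trans (add_le_add
      (hM q (ball_subset_closedBall.trans (closedBall_subset_cthickening hp r) hq))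
      (hM p (self_subset_cthickening K hp)))

section
variable {H G : Type*} [NormedAddCommGroup H] [NormedSpace ℂ H] [FiniteDimensional ℂ H]
  [NormedAddCommGroup G] [NormedSpace ℂ G] [FiniteDimensional ℂ G]

theorem DifferentiableOn.intervalIntegral_comp_clm_add {ψ : G → ℂ} {O : Set G}
    (hψ : DifferentiableOn ℂ ψ O) (hO : IsOpen O) (L : H →L[ℂ] G) {c : ℝ → G}
    (hc : Continuous c) {a b : ℝ} {s : Set H} (hs : IsOpen s)
    (hsO : ∀ x ∈ s, ∀ t ∈ [[a, b]], L x + c t ∈ O) :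
    DifferentiableOn ℂ (fun x => ∫ t in a..b, ψ (L x + c t)) s := by
  intro x₀ hx₀
  obtain ⟨ε, hε, hball⟩ := Metric.isOpen_iff.1 hs x₀ hx₀
  have hN : closedBall x₀ (ε / 2) ⊆ s := (closedBall_subset_ball (half_lt_self hε)).trans hball
  set K := (fun q : H × ℝ => L q.1 + c q.2) '' (closedBall x₀ (ε / 2) ×ˢ [[a, b]])
  have hK : IsCompact K := ((isCompact_closedBall _ _).prod isCompact_uIcc).image (by fun_prop)
  have hKO : K ⊆ O := by
    rintro _ ⟨⟨x, t⟩, ⟨hx, ht⟩, rfl⟩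
    exact hsO x (hN hx) t ht
  obtain ⟨C, hC⟩ := hK.exists_bound_fderiv_of_differentiableOn hO hψ hKO
  have hcont : ∀ x ∈ s, ContinuousOn (fun t => ψ (L x + c t)) [[a, b]] := fun x hx =>
    hψ.continuousOn.comp (by fun_prop) fun t ht => hsO x hx t ht
  have hderiv : ∀ x ∈ s, ∀ t ∈ [[a, b]],
      HasFDerivAt (fun x => ψ (L x + c t)) ((fderiv ℂ ψ (L x + c t)).comp L) x := fun x hx t ht =>
    (hψ.differentiableAt (hO.mem_nhds (hsO x hx t ht))).hasFDerivAt.comp x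
      (L.hasFDerivAt.add_const (c t))
  borelize G
  have hmeas : AEStronglyMeasurable (fun t => (fderiv ℂ ψ (L x₀ + c t)).comp L)
      (volume.restrict (Ι a b)) :=
    ((continuous_id.clm_comp continuous_const).measurable.comp
      ((measurable_fderiv ℂ ψ).comp (by fun_prop))).aestronglyMeasurable
  have key := intervalIntegral.hasFDerivAt_integral_of_dominated_of_fderiv_le
    (F' := fun x t => (fderiv ℂ ψ (L x + c t)).comp L) (bound := fun _ => C * ‖L‖)
    (ball_mem_nhds x₀ (half_pos hε))
    (Filter.eventually_of_mem (hs.mem_nhds hx₀) fun x hx =>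
      ((hcont x hx).mono uIoc_subset_uIcc).aestronglyMeasurable measurableSet_uIoc)
    (hcont x₀ hx₀).intervalIntegrable hmeas
    (ae_of_all _ fun t ht x hx => ((fderiv ℂ ψ _).opNorm_comp_le L).trans
      (mul_le_mul_of_nonneg_right
        (hC _ ⟨(x, t), ⟨ball_subset_closedBall hx, uIoc_subset_uIcc ht⟩, rfl⟩) (norm_nonneg L)))
    intervalIntegrable_const
    (ae_of_all _ fun t ht x hx => hderiv x (hN (ball_subset_closedBall hx)) t (uIoc_subset_uIcc ht))
  exact key.differentiableAt.differentiableWithinAt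

theorem differentiableOn_integral_cauchyKernel {U : Set (H × ℂ)} (hU : IsOpen U)
    {φ : H × ℂ → ℂ} (hφ : DifferentiableOn ℂ φ U) {V : Set H} (hV : IsOpen V) {σ : ℝ → ℂ}
    (hσ : Continuous σ) {a b : ℝ} (hVσ : ∀ z ∈ V, ∀ t ∈ [[a, b]], (z, σ t) ∈ U) :
    DifferentiableOn ℂ (fun p : H × ℂ => ∫ t in a..b, (σ t - p.2)⁻¹ * φ (p.1, σ t))
      (V ×ˢ (σ '' [[a, b]])ᶜ) := by
  set O : Set (H × ℂ × ℂ) := {q | (q.1, q.2.1) ∈ U ∧ q.2.1 ≠ q.2.2}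
  have hO : IsOpen O :=
    (hU.preimage (by fun_prop)).inter (isOpen_ne_fun (by fun_prop) (by fun_prop))
  have hψ : DifferentiableOn ℂ (fun q : H × ℂ × ℂ => (q.2.1 - q.2.2)⁻¹ * φ (q.1, q.2.1)) O :=
    (DifferentiableOn.inv (by fun_prop) fun q hq => sub_ne_zero.2 hq.2).mul
      (hφ.comp (by fun_prop) fun q hq => hq.1)
  let L : H × ℂ →L[ℂ] H × ℂ × ℂ :=
    (ContinuousLinearMap.fst ℂ H ℂ).prod ((0 : H × ℂ →L[ℂ] ℂ).prod (ContinuousLinearMap.snd ℂ H ℂ))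
  refine (hψ.intervalIntegral_comp_clm_add hO L (c := fun t => ((0 : H), σ t, (0 : ℂ)))
    (a := a) (b := b) (by fun_prop) (hV.prod (isCompact_uIcc.image hσ).isClosed.isOpen_compl)
    fun p hp t ht => ?_).congr fun p hp => ?_
  · obtain ⟨hz, hw⟩ := hp
    simpa [L, O] using ⟨hVσ _ hz t ht, fun h => hw ⟨t, ht, h⟩⟩
  · simp [L]
end

section
variable {H : Type*} [NormedAddCommGroup H] [NormedSpace ℂ H] [FiniteDimensional ℂ H]

theorem exists_cousin_decomposition_of_rect {U : Set (H × ℂ)} (hU : IsOpen U)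
    {φ : H × ℂ → ℂ} (hφ : DifferentiableOn ℂ φ U) {V : Set H} (hV : IsOpen V) {A B : ℝ}
    (hA : 0 ≤ A) (hB : 0 ≤ B) (hVU : V ×ˢ (Icc (-A) A ×ℂ Icc (-B) B) ⊆ U) :
    ∃ Φ₁ Φ₂ : H × ℂ → ℂ, DifferentiableOn ℂ Φ₁ (V ×ˢ (Iio A ×ℂ Ioo (-B) B)) ∧
      DifferentiableOn ℂ Φ₂ (V ×ˢ (Ioi (-A) ×ℂ univ)) ∧
      ∀ p ∈ V ×ˢ (Ioo (-A) A ×ℂ Ioo (-B) B), Φ₁ p - Φ₂ p = φ p := by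
  have hside : ∀ σ : ℝ → ℂ, Continuous σ → ∀ a b : ℝ,
      (∀ t ∈ [[a, b]], σ t ∈ Icc (-A) A ×ℂ Icc (-B) B) → ∀ S : Set ℂ, (∀ t, σ t ∉ S) →
      DifferentiableOn ℂ (fun p : H × ℂ => ∫ t in a..b, (σ t - p.2)⁻¹ * φ (p.1, σ t))
        (V ×ˢ S) := fun σ hσ a b hσR S hσS =>
    (differentiableOn_integral_cauchyKernel hU hφ hV hσ fun z hz t ht => hVU ⟨hz, hσR t ht⟩).mono
      (Set.prod_mono_right fun w hw ⟨t, _, htw⟩ => hσS t (htw ▸ hw))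
  have hR : ∀ x ∈ [[-A, A]], ∀ y ∈ [[-B, B]], (x : ℂ) + y * I ∈ Icc (-A) A ×ℂ Icc (-B) B :=
    fun x hx y hy => by
      rw [uIcc_of_le (neg_le_self hA)] at hx
      rw [uIcc_of_le (neg_le_self hB)] at hy
      simpa [mem_reProdIm] using ⟨hx, hy⟩
  refine ⟨fun p => (2 * π * I)⁻¹ *
      ((∫ x : ℝ in -A..A, (x + (-B : ℝ) * I - p.2)⁻¹ * φ (p.1, x + (-B : ℝ) * I)) -
        (∫ x : ℝ in -A..A, (x + B * I - p.2)⁻¹ * φ (p.1, x + B * I)) +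
        I * ∫ y : ℝ in -B..B, (A + y * I - p.2)⁻¹ * φ (p.1, A + y * I)),
    fun p => (2 * π * I)⁻¹ *
      (I * ∫ y : ℝ in -B..B, ((-A : ℝ) + y * I - p.2)⁻¹ * φ (p.1, (-A : ℝ) + y * I)),
    ?_, ?_, ?_⟩
  · exact (((hside _ (by fun_prop) (-A) A (fun t ht => hR t ht _ left_mem_uIcc) _
        fun t h => by simp [mem_reProdIm] at h).sub
      (hside _ (by fun_prop) (-A) A (fun t ht => hR t ht _ right_mem_uIcc) _
        fun t h => by simp [mem_reProdIm] at h)).add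
      ((hside _ (by fun_prop) (-B) B (hR _ right_mem_uIcc) _
        fun t h => by simp [mem_reProdIm] at h).const_mul I)).const_mul _
  · exact ((hside _ (by fun_prop) (-B) B (hR _ left_mem_uIcc) _
        fun t h => by simp [mem_reProdIm] at h).const_mul I).const_mul _
  · rintro ⟨z, c⟩ ⟨hz, hc⟩
    have hf : DifferentiableOn ℂ (fun ζ => φ (z, ζ)) (Icc (-A) A ×ℂ Icc (-B) B) :=
      hφ.comp (by fun_prop) fun ζ hζ => hVU ⟨hz, hζ⟩
    have hcauchy := rectIntegral_inv_sub_smul hf hc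
    simp only [rectIntegral, smul_eq_mul] at hcauchy
    have h2πI : 2 * (π : ℂ) * I ≠ 0 := by simp [Real.pi_ne_zero]
    calc _ = (2 * π * I)⁻¹ * (2 * π * I * φ (z, c)) := by rw [← hcauchy]; ring
      _ = φ (z, c) := inv_mul_cancel_left₀ h2πI _
end

theorem stmt_7_general (m : ℕ) (F : Set (Fin m → ℂ)) (hF : IsClosedCuboid F)
    (T δ θ : ℝ) (hδ : 0 < δ) (hθ : 0 ≤ θ)
    (U : Set ((Fin m → ℂ) × ℂ)) (hU : IsOpen U)
    (hUsub : F ×ˢ {w : ℂ | |w.re| ≤ δ ∧ |w.im| ≤ θ + δ} ⊆ U)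
    (φ : (Fin m → ℂ) × ℂ → ℂ) (hφ : DifferentiableOn ℂ φ U) :
    ∃ (U₁ U₂ U₃ : Set ((Fin m → ℂ) × ℂ)) (Φ₁ Φ₂ : (Fin m → ℂ) × ℂ → ℂ),
      IsOpen U₁ ∧ IsOpen U₂ ∧ IsOpen U₃ ∧
      F ×ˢ {w : ℂ | -T ≤ w.re ∧ w.re ≤ δ ∧ |w.im| ≤ θ} ⊆ U₁ ∧
      F ×ˢ {w : ℂ | -δ ≤ w.re ∧ w.re ≤ T ∧ |w.im| ≤ θ} ⊆ U₂ ∧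
      (F ×ˢ {w : ℂ | -T ≤ w.re ∧ w.re ≤ δ ∧ |w.im| ≤ θ}) ∩
        (F ×ˢ {w : ℂ | -δ ≤ w.re ∧ w.re ≤ T ∧ |w.im| ≤ θ}) ⊆ U₃ ∧
      U₃ ⊆ U₁ ∩ U₂ ∧ U₃ ⊆ U ∧
      DifferentiableOn ℂ Φ₁ U₁ ∧ DifferentiableOn ℂ Φ₂ U₂ ∧
      ∀ z ∈ U₃, Φ₁ z - Φ₂ z = φ z := by
  have hrect : {w : ℂ | |w.re| ≤ δ ∧ |w.im| ≤ θ + δ} = Icc (-δ) δ ×ℂ Icc (-(θ + δ)) (θ + δ) := by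
    ext w
    simp [mem_reProdIm, abs_le]
  rw [hrect] at hUsub
  obtain ⟨V, hV, hFV, A, B, hδA, hθB, hVU⟩ :=
    exists_isOpen_prod_rect_subset hF.isCompact hU hδ (by linarith) hUsub
  obtain ⟨Φ₁, Φ₂, hΦ₁, hΦ₂, hΦ⟩ :=
    exists_cousin_decomposition_of_rect hU hφ hV (by linarith) (by linarith) hVU
  refine ⟨_, _, _, Φ₁, Φ₂, hV.prod (isOpen_Iio.reProdIm isOpen_Ioo),
    hV.prod (isOpen_Ioi.reProdIm isOpen_univ), hV.prod (isOpen_Ioo.reProdIm isOpen_Ioo),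
    ?_, ?_, ?_, ?_, ?_, hΦ₁, hΦ₂, hΦ⟩
  · rintro p ⟨hz, -, hre, him⟩
    exact ⟨hFV hz, hre.trans_lt hδA, abs_lt.1 (by linarith)⟩
  · rintro p ⟨hz, hre, -⟩
    exact ⟨hFV hz, (neg_lt_neg hδA).trans_le hre, trivial⟩
  · rintro p ⟨⟨hz, -, hre, him⟩, -, hre', -⟩
    exact ⟨hFV hz, ⟨(neg_lt_neg hδA).trans_le hre', hre.trans_lt hδA⟩, abs_lt.1 (by linarith)⟩
  · rintro p ⟨hz, ⟨hre, hre'⟩, him⟩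
    exact ⟨⟨hz, hre', him⟩, hz, hre, trivial⟩
  · refine (Set.prod_mono_right fun w hw => ?_).trans hVU
    exact ⟨Ioo_subset_Icc_self hw.1, Ioo_subset_Icc_self hw.2⟩

/-- Cousin decomposition: a function `φ` holomorphic near
`F × {|Re z_n| ≤ δ, |Im z_n| ≤ θ + δ}` splits as `φ = Φ₁ - Φ₂` near `E₁ ∩ E₂`, where
`Φ₁, Φ₂` are holomorphic near `E₁ = F × {-T ≤ Re z_n ≤ δ, |Im z_n| ≤ θ}` and
`E₂ = F × {-δ ≤ Re z_n ≤ T, |Im z_n| ≤ θ}` respectively. -/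
theorem stmt_7 (m : ℕ) (F : Set (Fin m → ℂ)) (hF : IsClosedCuboid F)
    (T δ θ : ℝ) (hδ : 0 < δ) (hδT : δ < T) (hθ : 0 ≤ θ)
    (U : Set ((Fin m → ℂ) × ℂ)) (hU : IsOpen U)
    (hUsub : F ×ˢ {w : ℂ | |w.re| ≤ δ ∧ |w.im| ≤ θ + δ} ⊆ U)
    (φ : (Fin m → ℂ) × ℂ → ℂ) (hφ : DifferentiableOn ℂ φ U) :
    ∃ (U₁ U₂ U₃ : Set ((Fin m → ℂ) × ℂ)) (Φ₁ Φ₂ : (Fin m → ℂ) × ℂ → ℂ),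
      IsOpen U₁ ∧ IsOpen U₂ ∧ IsOpen U₃ ∧
      F ×ˢ {w : ℂ | -T ≤ w.re ∧ w.re ≤ δ ∧ |w.im| ≤ θ} ⊆ U₁ ∧
      F ×ˢ {w : ℂ | -δ ≤ w.re ∧ w.re ≤ T ∧ |w.im| ≤ θ} ⊆ U₂ ∧
      (F ×ˢ {w : ℂ | -T ≤ w.re ∧ w.re ≤ δ ∧ |w.im| ≤ θ}) ∩
        (F ×ˢ {w : ℂ | -δ ≤ w.re ∧ w.re ≤ T ∧ |w.im| ≤ θ}) ⊆ U₃ ∧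
      U₃ ⊆ U₁ ∩ U₂ ∧ U₃ ⊆ U ∧
      DifferentiableOn ℂ Φ₁ U₁ ∧ DifferentiableOn ℂ Φ₂ U₂ ∧
      ∀ z ∈ U₃, Φ₁ z - Φ₂ z = φ z :=
  stmt_7_general m F hF T δ θ hδ hθ U hU hUsub φ hφ
end
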